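/- arXiv:2103.14058 — 4 statements merged into one kernel-verified Lean document; each statement's English description precedes it below -/
import Mathlib

section
/- Let a : ℝ → ℝ be continuous on [0,1] with a(0)=0 and a(x)>0 for all x ∈ (0,1], and suppose there exists α ∈ (0,2) such that x ↦ x^α/a(x) is nondecreasing on (0,1]. Then there exists a constant C > 0 such that for every function y : ℝ → ℝ that is continuously differentiable on [0,1] and satisfies y(0)=y(1)=0, the function x ↦ y(x)²/a(x) is Lebesgue integrable on (0,1) and ∫₀¹ y(x)²/a(x) dx ≤ C ∫₀¹ (y'(x))² dx. -/
open MeasureTheory Set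

/-- Cauchy–Schwarz on an interval: `(∫₀ˣ g)² ≤ x ∫₀ˣ g²`. -/
lemma cs_interval_aux {g : ℝ → ℝ} {x : ℝ} (hx : 0 < x)
    (hg : IntervalIntegrable g volume 0 x)
    (hg2 : IntervalIntegrable (fun t => g t ^ 2) volume 0 x) :
    (∫ t in (0:ℝ)..x, g t) ^ 2 ≤ x * ∫ t in (0:ℝ)..x, g t ^ 2 := by
  set S := ∫ t in (0:ℝ)..x, g t with hS
  set T := ∫ t in (0:ℝ)..x, g t ^ 2 with hT
  set c := S / x with hc
  have h0 : (0:ℝ) ≤ ∫ t in (0:ℝ)..x, (g t - c) ^ 2 :=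
    intervalIntegral.integral_nonneg hx.le (fun t _ => sq_nonneg _)
  have hexp : ∀ t : ℝ, (g t - c) ^ 2 = (g t ^ 2 - (2 * c) * g t) + c ^ 2 := fun t => by ring
  have heq : ∫ t in (0:ℝ)..x, (g t - c) ^ 2 = (T - 2 * c * S) + c ^ 2 * x := by
    simp_rw [hexp]
    rw [intervalIntegral.integral_add (hg2.sub (hg.const_mul _)) intervalIntegrable_const,
        intervalIntegral.integral_sub hg2 (hg.const_mul _),
        intervalIntegral.integral_const_mul, intervalIntegral.integral_const]
    simp [smul_eq_mul]
    ring
  rw [heq] at h0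
  have hx' : x ≠ 0 := hx.ne'
  have hmul : ((T - 2 * c * S) + c ^ 2 * x) * x = T * x - S ^ 2 := by
    rw [hc]; field_simp; ring
  have : 0 ≤ T * x - S ^ 2 := by
    rw [← hmul]; exact mul_nonneg h0 hx.le
  nlinarith [this]

/-- Hardy–Poincaré inequality: there is `C > 0` such that for every `C¹`
function `y` on `[0,1]` with `y 0 = y 1 = 0`, the function `x ↦ y x ^ 2 / a x`
is integrable on `(0,1)` and `∫ y²/a ≤ C ∫ (y')²`. -/
theorem stmt_4 (a : ℝ → ℝ) (α : ℝ)
    (ha_cont : ContinuousOn a (Set.Icc 0 1))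
    (ha0 : a 0 = 0)
    (ha_pos : ∀ x ∈ Set.Ioc (0:ℝ) 1, 0 < a x)
    (hα : α ∈ Set.Ioo (0:ℝ) 2)
    (hmono : MonotoneOn (fun x => x ^ α / a x) (Set.Ioc (0:ℝ) 1)) :
    ∃ C > 0, ∀ y : ℝ → ℝ, ContDiffOn ℝ 1 y (Set.Icc 0 1) → y 0 = 0 → y 1 = 0 →
      MeasureTheory.IntegrableOn (fun x => (y x) ^ 2 / a x) (Set.Ioo 0 1) ∧
      ∫ x in Set.Ioo (0:ℝ) 1, (y x) ^ 2 / a x ≤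
        C * ∫ x in Set.Ioo (0:ℝ) 1, (deriv y x) ^ 2 := by
  obtain ⟨hα0, hα2⟩ := hα
  have ha1 : 0 < a 1 := ha_pos 1 ⟨zero_lt_one, le_rfl⟩
  have h2α : (0:ℝ) < 2 - α := by linarith
  refine ⟨1 / (a 1 * (2 - α)), by positivity, ?_⟩
  intro y hy hy0 hy1
  set g := derivWithin y (Set.Icc 0 1) with hgdef
  have hgc : ContinuousOn g (Set.Icc 0 1) :=
    hy.continuousOn_derivWithin (uniqueDiffOn_Icc zero_lt_one) le_rfl
  have hder : ∀ x ∈ Set.Ioo (0:ℝ) 1, HasDerivAt y (g x) x := by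
    intro x hx
    have hmem : Set.Icc (0:ℝ) 1 ∈ nhds x := Icc_mem_nhds hx.1 hx.2
    have hd := ((hy.differentiableOn one_ne_zero x (Set.mem_Icc_of_Ioo hx)).differentiableAt
      hmem).hasDerivAt
    rwa [hgdef, derivWithin_of_mem_nhds hmem]
  have hderiv_eq : ∀ x ∈ Set.Ioo (0:ℝ) 1, deriv y x = g x :=
    fun x hx => (hder x hx).deriv
  set I := ∫ x in Set.Ioo (0:ℝ) 1, (deriv y x) ^ 2 with hIdef
  have hg2int : IntegrableOn (fun x => g x ^ 2) (Set.Ioo (0:ℝ) 1) :=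
    ((hgc.pow 2).integrableOn_compact isCompact_Icc).mono_set Set.Ioo_subset_Icc_self
  have hI_int : IntegrableOn (fun x => (deriv y x) ^ 2) (Set.Ioo (0:ℝ) 1) :=
    hg2int.congr_fun (fun x hx => by rw [hderiv_eq x hx]) measurableSet_Ioo
  have hIg : I = ∫ x in Set.Ioo (0:ℝ) 1, g x ^ 2 :=
    setIntegral_congr_fun measurableSet_Ioo (fun t ht => by simp [hderiv_eq t ht])
  have hI_nonneg : 0 ≤ I :=
    setIntegral_nonneg measurableSet_Ioo (fun x _ => sq_nonneg _)
  -- key pointwise bound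
  have hbound : ∀ x ∈ Set.Ioo (0:ℝ) 1, y x ^ 2 / a x ≤ I / a 1 * x ^ (1 - α) := by
    intro x hx
    have hax : 0 < a x := ha_pos x ⟨hx.1, hx.2.le⟩
    have hxpos : 0 < x := hx.1
    have hxpow : 0 < x ^ α := Real.rpow_pos_of_pos hxpos α
    have hm : x ^ α / a x ≤ 1 / a 1 := by
      have := hmono (Set.mem_Ioc.mpr ⟨hxpos, hx.2.le⟩)
        (Set.mem_Ioc.mpr ⟨zero_lt_one, le_rfl⟩) hx.2.le
      simpa [Real.one_rpow] using this
    have hcont : ContinuousOn y (Set.Icc 0 x) :=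
      hy.continuousOn.mono (Set.Icc_subset_Icc le_rfl hx.2.le)
    have hgint : IntervalIntegrable g volume 0 x :=
      (hgc.mono (Set.Icc_subset_Icc le_rfl hx.2.le)).intervalIntegrable_of_Icc hxpos.le
    have hgint2 : IntervalIntegrable (fun t => g t ^ 2) volume 0 x :=
      ((hgc.pow 2).mono (Set.Icc_subset_Icc le_rfl hx.2.le)).intervalIntegrable_of_Icc hxpos.le
    have hftc : ∫ t in (0:ℝ)..x, g t = y x - y 0 :=
      intervalIntegral.integral_eq_sub_of_hasDeriv_right_of_le hxpos.le hcont
        (fun t ht => (hder t ⟨ht.1, ht.2.trans hx.2⟩).hasDerivWithinAt) hgint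
    have hyx : y x = ∫ t in (0:ℝ)..x, g t := by rw [hftc, hy0, sub_zero]
    have hcs : y x ^ 2 ≤ x * ∫ t in (0:ℝ)..x, g t ^ 2 := by
      rw [hyx]; exact cs_interval_aux hxpos hgint hgint2
    have hsub : ∫ t in (0:ℝ)..x, g t ^ 2 ≤ I := by
      rw [hIg, intervalIntegral.integral_of_le hxpos.le]
      refine setIntegral_mono_set hg2int ?_ ?_
      · filter_upwards with t using sq_nonneg _
      · exact HasSubset.Subset.eventuallyLE (Set.Ioc_subset_Ioo_right hx.2)
    have hyI : y x ^ 2 ≤ x * I := hcs.trans (by nlinarith [hxpos])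
    have h1 : y x ^ 2 / a x ≤ x * I / a x := by gcongr
    have hx1 : x ^ (1 - α) = x / x ^ α := by
      rw [Real.rpow_sub hxpos, Real.rpow_one]
    have h2 : x * I / a x ≤ I / a 1 * x ^ (1 - α) := by
      have heq1 : x * I / a x = (I * (x / x ^ α)) * (x ^ α / a x) := by
        field_simp
      have heq2 : (I * (x / x ^ α)) * (1 / a 1) = I / a 1 * x ^ (1 - α) := by
        rw [hx1]; ring
      rw [heq1, ← heq2]
      exact mul_le_mul_of_nonneg_left hm (by positivity)
    exact h1.trans h2
  -- integrability of the bound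
  have h1α : (-1:ℝ) < 1 - α := by linarith
  have hBint : IntegrableOn (fun x : ℝ => I / a 1 * x ^ (1 - α)) (Set.Ioo (0:ℝ) 1) := by
    have h := intervalIntegral.intervalIntegrable_rpow' (a := 0) (b := 1) h1α
    have h2 := (intervalIntegrable_iff_integrableOn_Ioc_of_le zero_le_one).mp h
    exact (h2.mono_set Set.Ioo_subset_Ioc_self).const_mul _
  have hmeas : AEStronglyMeasurable (fun x => y x ^ 2 / a x) (volume.restrict (Set.Ioo 0 1)) := by
    apply ContinuousOn.aestronglyMeasurable _ measurableSet_Ioo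
    exact ((hy.continuousOn.mono Set.Ioo_subset_Icc_self).pow 2).div
      (ha_cont.mono Set.Ioo_subset_Icc_self)
      (fun x hx => (ha_pos x ⟨hx.1, hx.2.le⟩).ne')
  have hint : IntegrableOn (fun x => y x ^ 2 / a x) (Set.Ioo (0:ℝ) 1) := by
    refine hBint.mono' hmeas ?_
    filter_upwards [ae_restrict_mem measurableSet_Ioo] with x hx
    have hax : 0 < a x := ha_pos x ⟨hx.1, hx.2.le⟩
    rw [Real.norm_of_nonneg (by positivity)]
    exact hbound x hx
  refine ⟨hint, ?_⟩
  have hstep := setIntegral_mono_on hint hBint measurableSet_Ioo hbound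
  have hcomp : ∫ x in Set.Ioo (0:ℝ) 1, I / a 1 * x ^ (1 - α) = I / a 1 * (1 / (2 - α)) := by
    rw [← integral_Ioc_eq_integral_Ioo, ← intervalIntegral.integral_of_le zero_le_one,
        intervalIntegral.integral_const_mul, integral_rpow (Or.inl h1α)]
    rw [Real.one_rpow, Real.zero_rpow (show (1:ℝ) - α + 1 ≠ 0 by intro h; linarith
      [h]), show (1:ℝ) - α + 1 = 2 - α by ring]
    norm_num
  have hfinal : I / a 1 * (1 / (2 - α)) = 1 / (a 1 * (2 - α)) * I := by
    field_simp
  rw [hcomp, hfinal] at hstep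
  exact hstep
end

section
/- Let a : ℝ → ℝ be continuous on [0,1] with a(0)=0 and a(x)>0 for all x ∈ (0,1], and suppose there exists α ∈ (0,2) such that x ↦ x^α/a(x) is nondecreasing on (0,1]. Then the function y ↦ (y/a(y))·exp(y²) is Lebesgue integrable on (0,1), and the function p : [0,1] → ℝ defined by p(x) := ∫₀ˣ (y/a(y))·exp(y²) dy is nonnegative and monotone nondecreasing on [0,1], so that 0 = p(0) ≤ p(x) ≤ p(1) for all x ∈ [0,1]. -/
open MeasureTheory Real Set

/-- The integrand `y ↦ (y / a y) * exp (y²)` of the Carleman weight `p` is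
integrable on `(0,1)`, and `p x = ∫₀ˣ (y / a y) * exp (y²) dy` is nonnegative
and nondecreasing on `[0,1]`, with `0 = p 0 ≤ p x ≤ p 1`. -/
theorem stmt_5 (a : ℝ → ℝ) (α : ℝ)
    (ha_cont : ContinuousOn a (Set.Icc 0 1))
    (ha0 : a 0 = 0)
    (ha_pos : ∀ x ∈ Set.Ioc (0:ℝ) 1, 0 < a x)
    (hα : α ∈ Set.Ioo (0:ℝ) 2)
    (hmono : MonotoneOn (fun x => x ^ α / a x) (Set.Ioc (0:ℝ) 1))
    (p : ℝ → ℝ)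
    (hp : ∀ x, p x = ∫ y in (0:ℝ)..x, y / a y * Real.exp (y ^ 2)) :
    MeasureTheory.IntegrableOn (fun y => y / a y * Real.exp (y ^ 2)) (Set.Ioo 0 1) ∧
    p 0 = 0 ∧ MonotoneOn p (Set.Icc 0 1) ∧
    ∀ x ∈ Set.Icc (0:ℝ) 1, 0 ≤ p x ∧ p x ≤ p 1 := by
  set f : ℝ → ℝ := fun y => y / a y * Real.exp (y ^ 2) with hf
  have ha1 : 0 < a 1 := ha_pos 1 ⟨one_pos, le_refl 1⟩
  -- nonnegativity of the integrand on [0,1]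
  have hf_nonneg : ∀ y ∈ Set.Icc (0:ℝ) 1, 0 ≤ f y := by
    intro y hy
    rcases eq_or_lt_of_le hy.1 with h0 | h0
    · simp [hf, ← h0, ha0]
    · have := ha_pos y ⟨h0, hy.2⟩
      positivity
  -- the pointwise bound f y ≤ C * y^(1-α) on (0,1)
  have hbound : ∀ y ∈ Set.Ioo (0:ℝ) 1,
      f y ≤ Real.exp 1 / a 1 * y ^ (1 - α) := by
    intro y hy
    have hy0 : (0:ℝ) < y := hy.1
    have hy1 : y ≤ 1 := hy.2.le
    have hay : 0 < a y := ha_pos y ⟨hy0, hy1⟩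
    have hmy : y ^ α / a y ≤ 1 ^ α / a 1 :=
      hmono ⟨hy0, hy1⟩ ⟨one_pos, le_refl 1⟩ hy1
    rw [Real.one_rpow] at hmy
    have hsplit : y / a y = y ^ (1 - α) * (y ^ α / a y) := by
      rw [← mul_div_assoc, ← Real.rpow_add hy0]
      simp [Real.rpow_one]
    have h1 : y / a y ≤ y ^ (1 - α) * (1 / a 1) := by
      rw [hsplit]
      exact mul_le_mul_of_nonneg_left hmy (Real.rpow_nonneg hy0.le _)
    have hexp : Real.exp (y ^ 2) ≤ Real.exp 1 := by
      apply Real.exp_le_exp.2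
      nlinarith
    calc f y = y / a y * Real.exp (y ^ 2) := rfl
      _ ≤ y ^ (1 - α) * (1 / a 1) * Real.exp 1 := by
          apply mul_le_mul h1 hexp (Real.exp_pos _).le
          positivity
      _ = Real.exp 1 / a 1 * y ^ (1 - α) := by ring
  -- measurability: f is continuous on Ioo 0 1
  have hf_cont : ContinuousOn f (Set.Ioo 0 1) := by
    apply ContinuousOn.mul
    · apply ContinuousOn.div continuousOn_id
        (ha_cont.mono (fun y hy => ⟨hy.1.le, hy.2.le⟩))
      intro y hy
      exact (ha_pos y ⟨hy.1, hy.2.le⟩).ne'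
    · exact (Real.continuous_exp.comp (continuous_pow 2)).continuousOn
  -- integrability of the dominating function
  have hg_int : IntegrableOn (fun y : ℝ => Real.exp 1 / a 1 * y ^ (1 - α))
      (Set.Ioo 0 1) := by
    have h1 : (-1:ℝ) < 1 - α := by linarith [hα.2]
    have := (intervalIntegral.intervalIntegrable_rpow' (a := 0) (b := 1) h1)
    have h2 : IntegrableOn (fun y : ℝ => y ^ (1 - α)) (Set.Ioc 0 1) := by
      simpa [intervalIntegrable_iff, Set.uIoc_of_le (zero_le_one)] using this
    exact (h2.mono_set Set.Ioo_subset_Ioc_self).const_mul _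
  have hf_int : IntegrableOn f (Set.Ioo 0 1) := by
    apply MeasureTheory.Integrable.mono hg_int (hf_cont.aestronglyMeasurable measurableSet_Ioo)
    rw [ae_restrict_iff' measurableSet_Ioo]
    filter_upwards with y hy
    have h1 : 0 ≤ f y := hf_nonneg y ⟨hy.1.le, hy.2.le⟩
    have h2 := hbound y hy
    have h3 : (0:ℝ) ≤ Real.exp 1 / a 1 * y ^ (1 - α) := le_trans h1 h2
    rw [Real.norm_of_nonneg h1, Real.norm_of_nonneg h3]
    exact h2
  have hf_int' : IntegrableOn f (Set.Ioc 0 1) :=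
    (integrableOn_Ioc_iff_integrableOn_Ioo).2 hf_int
  -- interval integrability on subintervals of [0,1]
  have hii : ∀ x ∈ Set.Icc (0:ℝ) 1, ∀ x' ∈ Set.Icc (0:ℝ) 1, x ≤ x' →
      IntervalIntegrable f volume x x' := by
    intro x hx x' hx' hxx
    rw [intervalIntegrable_iff, Set.uIoc_of_le hxx]
    exact hf_int'.mono_set (Set.Ioc_subset_Ioc hx.1 hx'.2)
  have hp0 : p 0 = 0 := by simp [hp 0]
  have hmonop : MonotoneOn p (Set.Icc 0 1) := by
    intro x hx x' hx' hxx
    have h1 := hii 0 (by norm_num) x hx hx.1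
    have h2 := hii x hx x' hx' hxx
    have hadd := intervalIntegral.integral_add_adjacent_intervals h1 h2
    have hpos : 0 ≤ ∫ y in x..x', f y := by
      apply intervalIntegral.integral_nonneg hxx
      intro u hu
      exact hf_nonneg u ⟨le_trans hx.1 hu.1, le_trans hu.2 hx'.2⟩
    rw [hp x, hp x']
    calc (∫ y in (0:ℝ)..x, f y) ≤ (∫ y in (0:ℝ)..x, f y) + ∫ y in x..x', f y := by
          linarith
      _ = ∫ y in (0:ℝ)..x', f y := hadd
  refine ⟨hf_int, hp0, hmonop, fun x hx => ?_⟩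
  constructor
  · rw [← hp0]
    exact hmonop (by norm_num) hx hx.1
  · exact hmonop hx (by norm_num) hx.2
end

section
/- Let T > 0, P > 0, S > 0, and let ρ > (log 2)/S. Let β = 4 and let λ be a real number with (e^{2ρS} − 1)/(3P) ≤ λ < 2(e^{2ρS} − e^{ρS})/(3P). Let ε ∈ (0, √(1 − 2√2/3)) and set T* := (1+ε)·T/2 and θ(t) := 1/(t(T−t))² for t ∈ (0,T). Then 2·( −3λP·θ(T/2) + 4λP·θ(T*) + (e^{ρS} − e^{2ρS})·θ(T/2) ) < 0. -/
set_option maxHeartbeats 1600000 in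
/-- Lemma 5 (the crucial lemma): with `β = 4`,
`2(φ̂(0) − φ̌(T*) + Φ̂(0)) < 0`, i.e.
`2(−3λP θ(T/2) + 4λP θ(T*) + (e^{ρS} − e^{2ρS}) θ(T/2)) < 0`. -/
theorem stmt_6 (T P S ρ lam ε Tstar : ℝ) (θ : ℝ → ℝ)
    (hT : 0 < T) (hP : 0 < P) (hS : 0 < S)
    (hρ : Real.log 2 / S < ρ)
    (hlam₁ : (Real.exp (2 * ρ * S) - 1) / (3 * P) ≤ lam)
    (hlam₂ : lam < 2 * (Real.exp (2 * ρ * S) - Real.exp (ρ * S)) / (3 * P))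
    (hε : ε ∈ Set.Ioo 0 (Real.sqrt (1 - 2 * Real.sqrt 2 / 3)))
    (hTstar : Tstar = (1 + ε) * T / 2)
    (hθ : ∀ t, 0 < t → t < T → θ t = 1 / (t * (T - t)) ^ 2) :
    2 * (-(3 * lam * P * θ (T / 2)) + 4 * lam * P * θ Tstar
        + (Real.exp (ρ * S) - Real.exp (2 * ρ * S)) * θ (T / 2)) < 0 := by
  obtain ⟨hε0, hεs⟩ := hε
  have hs2 : Real.sqrt 2 ^ 2 = 2 := Real.sq_sqrt (by norm_num)
  have hs2pos : 0 < Real.sqrt 2 := Real.sqrt_pos.mpr (by norm_num)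
  have h32 : Real.sqrt 2 < 3 / 2 := by nlinarith
  have hε2 : ε ^ 2 < 1 - 2 * Real.sqrt 2 / 3 :=
    (Real.lt_sqrt hε0.le).mp hεs
  have hε1 : ε < 1 := by nlinarith
  -- exponential facts
  set A := Real.exp (ρ * S) with hA
  have hA2 : 2 < A := by
    have : Real.log 2 < ρ * S := by
      have := (div_lt_iff₀ hS).mp hρ; linarith
    calc (2:ℝ) = Real.exp (Real.log 2) := (Real.exp_log (by norm_num)).symm
    _ < A := Real.exp_lt_exp.mpr this
  have hAsq : Real.exp (2 * ρ * S) = A ^ 2 := by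
    rw [hA, sq, ← Real.exp_add]; ring_nf
  rw [hAsq] at hlam₁ hlam₂
  have hlamP : 0 < lam * P := by
    have h1 : 0 < (A ^ 2 - 1) / (3 * P) := by
      apply div_pos (by nlinarith) (by linarith)
    nlinarith [lt_of_lt_of_le h1 hlam₁]
  have hkey : 3 * (lam * P) < 2 * (A ^ 2 - A) := by
    have := (lt_div_iff₀ (by linarith : (0:ℝ) < 3 * P)).mp hlam₂
    nlinarith
  -- θ values
  have hθhalf : θ (T / 2) = 16 / T ^ 4 := by
    rw [hθ (T / 2) (by linarith) (by linarith)]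
    have h : T / 2 * (T - T / 2) = T ^ 2 / 4 := by ring
    rw [h, div_eq_div_iff (by positivity) (by positivity)]; ring
  have hTs0 : 0 < Tstar := by have := mul_pos (by linarith : (0:ℝ) < 1 + ε) hT; rw [hTstar]; linarith
  have hTsT : Tstar < T := by
    have := mul_lt_mul_of_pos_right (by linarith : (1:ℝ) + ε < 2) hT; rw [hTstar]; linarith
  have hu : 2 * Real.sqrt 2 / 3 < 1 - ε ^ 2 := by linarith
  have hu2 : 8 / 9 < (1 - ε ^ 2) ^ 2 := by nlinarith
  have hupos : 0 < 1 - ε ^ 2 := by nlinarith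
  have hθstar : θ Tstar = 16 / ((1 - ε ^ 2) ^ 2 * T ^ 4) := by
    rw [hθ Tstar hTs0 hTsT, hTstar]
    have h : (1 + ε) * T / 2 * (T - (1 + ε) * T / 2) = (1 - ε ^ 2) * T ^ 2 / 4 := by ring
    have hd1 : (0:ℝ) < ((1 - ε ^ 2) * T ^ 2 / 4) ^ 2 :=
      pow_pos (by positivity) 2
    have hd2 : (0:ℝ) < (1 - ε ^ 2) ^ 2 * T ^ 4 := by positivity
    rw [h, div_eq_div_iff hd1.ne' hd2.ne']
    ring
  rw [hAsq, hθhalf, hθstar]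
  have hT4 : 0 < T ^ 4 := by positivity
  have heq : 2 * (-(3 * lam * P * (16 / T ^ 4)) + 4 * lam * P * (16 / ((1 - ε ^ 2) ^ 2 * T ^ 4))
      + (A - A ^ 2) * (16 / T ^ 4))
      = 32 / ((1 - ε ^ 2) ^ 2 * T ^ 4) *
        (4 * (lam * P) - 3 * (lam * P) * (1 - ε ^ 2) ^ 2 + (A - A ^ 2) * (1 - ε ^ 2) ^ 2) := by
    field_simp; ring
  rw [heq]
  apply mul_neg_of_pos_of_neg (by positivity)
  have hY : (0:ℝ) < A ^ 2 - A := by nlinarith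
  have h1 : 0 < lam * P * ((1 - ε ^ 2) ^ 2 - 8 / 9) :=
    mul_pos hlamP (by linarith)
  have h2 : 0 < (A ^ 2 - A) * ((1 - ε ^ 2) ^ 2 - 8 / 9) :=
    mul_pos hY (by linarith)
  nlinarith [h1, h2]
end

section
/- Let a : ℝ → ℝ be continuous on [0,1] with a(x) > 0 for all x ∈ (0,1], let M := sup_{x∈[0,1]} √(a(x)), let y : ℝ → ℝ be measurable with x ↦ y(x)²/a(x) Lebesgue integrable on (0,1), and let K : ℝ × ℝ → ℝ be measurable with (x,τ) ↦ K(x,τ)²/a(x) Lebesgue integrable on (0,1)×(0,1). Then the function (x,τ) ↦ K(x,τ)·y(τ)·y(x)/a(x) is Lebesgue integrable on (0,1)×(0,1) and |∫₀¹∫₀¹ K(x,τ)·y(τ)·y(x)/a(x) dτ dx| ≤ M · (∫₀¹∫₀¹ K(x,τ)²/a(x) dτ dx)^{1/2} · ∫₀¹ y(x)²/a(x) dx. -/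
open MeasureTheory Set

/-- The Cauchy–Schwarz estimate (A2a) on the nonlocal term:
`|∫₀¹∫₀¹ K(x,τ) y(τ) y(x)/a(x) dτ dx| ≤ M (∫₀¹∫₀¹ K²/a)^{1/2} ∫₀¹ y²/a`,
where `M = sup_{[0,1]} √a`. -/
theorem stmt_13 (a y : ℝ → ℝ) (K : ℝ → ℝ → ℝ) (M : ℝ)
    (ha_cont : ContinuousOn a (Set.Icc 0 1))
    (ha_pos : ∀ x ∈ Set.Ioc (0:ℝ) 1, 0 < a x)
    (hM : M = sSup ((fun x => Real.sqrt (a x)) '' Set.Icc (0:ℝ) 1))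
    (hy_meas : Measurable y)
    (hy_int : MeasureTheory.IntegrableOn (fun x => (y x) ^ 2 / a x) (Set.Ioo 0 1))
    (hK_meas : Measurable (fun p : ℝ × ℝ => K p.1 p.2))
    (hK_int : MeasureTheory.IntegrableOn (fun p : ℝ × ℝ => (K p.1 p.2) ^ 2 / a p.1)
      (Set.Ioo 0 1 ×ˢ Set.Ioo 0 1)) :
    MeasureTheory.IntegrableOn (fun p : ℝ × ℝ => K p.1 p.2 * y p.2 * y p.1 / a p.1)
      (Set.Ioo 0 1 ×ˢ Set.Ioo 0 1) ∧
    |∫ x in Set.Ioo (0:ℝ) 1, ∫ τ in Set.Ioo (0:ℝ) 1, K x τ * y τ * y x / a x| ≤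
      M * Real.sqrt (∫ x in Set.Ioo (0:ℝ) 1, ∫ τ in Set.Ioo (0:ℝ) 1, (K x τ) ^ 2 / a x) *
        ∫ x in Set.Ioo (0:ℝ) 1, (y x) ^ 2 / a x := by
  -- Notation
  set S : Set (ℝ × ℝ) := Set.Ioo 0 1 ×ˢ Set.Ioo 0 1 with hS
  have hSmeas : MeasurableSet S := (measurableSet_Ioo).prod measurableSet_Ioo
  -- Basic facts about M
  have hbdd : BddAbove ((fun x => Real.sqrt (a x)) '' Set.Icc (0:ℝ) 1) :=
    (isCompact_Icc.image_of_continuousOn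
      (Real.continuous_sqrt.comp_continuousOn ha_cont)).bddAbove
  have hMx : ∀ x ∈ Set.Icc (0:ℝ) 1, Real.sqrt (a x) ≤ M := by
    intro x hx; rw [hM]; exact le_csSup hbdd ⟨x, hx, rfl⟩
  have hM0 : 0 ≤ M :=
    le_trans (Real.sqrt_nonneg (a 1)) (hMx 1 ⟨zero_le_one, le_refl 1⟩)
  have ha_le : ∀ x ∈ Set.Ioo (0:ℝ) 1, a x ≤ M ^ 2 := by
    intro x hx
    have hax : 0 < a x := ha_pos x ⟨hx.1, hx.2.le⟩
    have := hMx x ⟨hx.1.le, hx.2.le⟩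
    nlinarith [Real.sq_sqrt hax.le, Real.sqrt_nonneg (a x)]
  have haS : ∀ p ∈ S, 0 < a p.1 := fun p hp => ha_pos p.1 ⟨hp.1.1, hp.1.2.le⟩
  -- measurability of a on S
  have ha_am : AEMeasurable (fun p : ℝ × ℝ => a p.1) (volume.restrict S) := by
    have hcont : ContinuousOn (fun p : ℝ × ℝ => a p.1) S := by
      apply ha_cont.comp continuous_fst.continuousOn
      intro p hp; exact ⟨hp.1.1.le, hp.1.2.le⟩
    exact hcont.aemeasurable hSmeas
  have hsqrt_am : AEMeasurable (fun p : ℝ × ℝ => Real.sqrt (a p.1)) (volume.restrict S) :=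
    Real.continuous_sqrt.measurable.comp_aemeasurable ha_am
  -- the two L² factors
  set u : ℝ × ℝ → ℝ := fun p => K p.1 p.2 / Real.sqrt (a p.1) with hu
  set v : ℝ × ℝ → ℝ := fun p => y p.2 * (y p.1 / Real.sqrt (a p.1)) with hv
  have hu_am : AEStronglyMeasurable u (volume.restrict S) :=
    (hK_meas.aemeasurable.div hsqrt_am).aestronglyMeasurable
  have hv_am : AEStronglyMeasurable v (volume.restrict S) :=
    (((hy_meas.comp measurable_snd).aemeasurable).mul
      (((hy_meas.comp measurable_fst).aemeasurable).div hsqrt_am)).aestronglyMeasurable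
  have haeS : ∀ᵐ p ∂(volume.restrict S), p ∈ S := ae_restrict_mem hSmeas
  -- u² = K²/a a.e. on S
  have hu_sq : ∀ᵐ p ∂(volume.restrict S), (K p.1 p.2) ^ 2 / a p.1 = u p ^ 2 := by
    filter_upwards [haeS] with p hp
    have hap : 0 < a p.1 := haS p hp
    rw [hu, div_pow, Real.sq_sqrt hap.le]
  have hu2_int : Integrable (fun p => u p ^ 2) (volume.restrict S) :=
    hK_int.congr hu_sq
  have hu_mem : MemLp u 2 (volume.restrict S) :=
    (memLp_two_iff_integrable_sq hu_am).2 hu2_int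
  -- y² is integrable on (0,1)
  have hy2_int : IntegrableOn (fun τ => y τ ^ 2) (Set.Ioo 0 1) := by
    apply Integrable.mono' (hy_int.const_mul (M ^ 2))
      ((hy_meas.pow_const 2).aestronglyMeasurable)
    filter_upwards [ae_restrict_mem measurableSet_Ioo] with x hx
    have hax : 0 < a x := ha_pos x ⟨hx.1, hx.2.le⟩
    have h1 : y x ^ 2 = (y x ^ 2 / a x) * a x := by field_simp
    have h2 : 0 ≤ y x ^ 2 / a x := div_nonneg (sq_nonneg _) hax.le
    rw [Real.norm_of_nonneg (sq_nonneg _)]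
    nlinarith [mul_nonneg h2 (sub_nonneg.2 (ha_le x hx))]
  -- v² is integrable on S
  have hrestr : (volume.restrict (Set.Ioo (0:ℝ) 1)).prod (volume.restrict (Set.Ioo (0:ℝ) 1))
      = volume.restrict S := by
    rw [hS, Measure.prod_restrict, ← Measure.volume_eq_prod]
  have hg_int : Integrable (fun p : ℝ × ℝ => (y p.1 ^ 2 / a p.1) * y p.2 ^ 2)
      (volume.restrict S) := by
    rw [← hrestr]
    exact hy_int.mul_prod hy2_int
  have hv_sq : ∀ᵐ p ∂(volume.restrict S),
      (y p.1 ^ 2 / a p.1) * y p.2 ^ 2 = v p ^ 2 := by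
    filter_upwards [haeS] with p hp
    have hap : 0 < a p.1 := haS p hp
    rw [hv]
    have : (y p.2 * (y p.1 / Real.sqrt (a p.1))) ^ 2
        = y p.2 ^ 2 * (y p.1 ^ 2 / Real.sqrt (a p.1) ^ 2) := by ring
    rw [this, Real.sq_sqrt hap.le]; ring
  have hv2_int : Integrable (fun p => v p ^ 2) (volume.restrict S) :=
    hg_int.congr hv_sq
  have hv_mem : MemLp v 2 (volume.restrict S) :=
    (memLp_two_iff_integrable_sq hv_am).2 hv2_int
  -- the integrand equals u * v a.e. on S
  have hf_eq : ∀ᵐ p ∂(volume.restrict S),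
      K p.1 p.2 * y p.2 * y p.1 / a p.1 = u p * v p := by
    filter_upwards [haeS] with p hp
    have hap : 0 < a p.1 := haS p hp
    have hs : Real.sqrt (a p.1) ≠ 0 := (Real.sqrt_pos.2 hap).ne'
    have hss : Real.sqrt (a p.1) * Real.sqrt (a p.1) = a p.1 := Real.mul_self_sqrt hap.le
    rw [hu, hv]
    field_simp
    rw [Real.sq_sqrt hap.le]
  -- integrability of the integrand
  have hf_am : AEStronglyMeasurable (fun p : ℝ × ℝ => K p.1 p.2 * y p.2 * y p.1 / a p.1)
      (volume.restrict S) :=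
    (((hK_meas.aemeasurable.mul (hy_meas.comp measurable_snd).aemeasurable).mul
      (hy_meas.comp measurable_fst).aemeasurable).div ha_am).aestronglyMeasurable
  have hf_int : IntegrableOn (fun p : ℝ × ℝ => K p.1 p.2 * y p.2 * y p.1 / a p.1) S := by
    apply Integrable.mono' ((hu2_int.add hv2_int).div_const 2) hf_am
    filter_upwards [hf_eq] with p hp
    rw [hp, Real.norm_eq_abs, abs_mul]
    simp only [Pi.add_apply]
    nlinarith [sq_nonneg (|u p| - |v p|), sq_abs (u p), sq_abs (v p),
      abs_nonneg (u p), abs_nonneg (v p)]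
  refine ⟨hf_int, ?_⟩
  -- rewrite iterated integrals as integrals over S
  have hK_int' : IntegrableOn (fun p : ℝ × ℝ => (K p.1 p.2) ^ 2 / a p.1) S
      ((volume : Measure ℝ).prod volume) := by rwa [← Measure.volume_eq_prod]
  have hf_int' : IntegrableOn (fun p : ℝ × ℝ => K p.1 p.2 * y p.2 * y p.1 / a p.1) S
      ((volume : Measure ℝ).prod volume) := by rwa [← Measure.volume_eq_prod]
  have hiter1 : (∫ x in Set.Ioo (0:ℝ) 1, ∫ τ in Set.Ioo (0:ℝ) 1, K x τ * y τ * y x / a x)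
      = ∫ p in S, K p.1 p.2 * y p.2 * y p.1 / a p.1 := by
    rw [hS, Measure.volume_eq_prod]
    exact (setIntegral_prod _ hf_int').symm
  have hiter2 : (∫ x in Set.Ioo (0:ℝ) 1, ∫ τ in Set.Ioo (0:ℝ) 1, (K x τ) ^ 2 / a x)
      = ∫ p in S, (K p.1 p.2) ^ 2 / a p.1 := by
    rw [hS, Measure.volume_eq_prod]
    exact (setIntegral_prod _ hK_int').symm
  rw [hiter1, hiter2]
  -- main chain
  have habs : |∫ p in S, K p.1 p.2 * y p.2 * y p.1 / a p.1|
      ≤ ∫ p in S, ‖u p‖ * ‖v p‖ := by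
    rw [integral_congr_ae hf_eq, ← Real.norm_eq_abs]
    refine (norm_integral_le_integral_norm _).trans (le_of_eq ?_)
    apply integral_congr_ae
    filter_upwards with p
    rw [norm_mul]
  have hCS : (∫ p in S, ‖u p‖ * ‖v p‖)
      ≤ (∫ p in S, ‖u p‖ ^ (2:ℝ)) ^ ((1:ℝ)/2) * (∫ p in S, ‖v p‖ ^ (2:ℝ)) ^ ((1:ℝ)/2) :=
    by
    have h2 : ENNReal.ofReal (2:ℝ) = 2 := by norm_num
    exact integral_mul_norm_le_Lp_mul_Lq Real.HolderConjugate.two_two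
      (h2 ▸ hu_mem) (h2 ▸ hv_mem)
  -- identify the norms
  have hnorm_u : (∫ p in S, ‖u p‖ ^ (2:ℝ)) = ∫ p in S, (K p.1 p.2) ^ 2 / a p.1 := by
    apply integral_congr_ae
    filter_upwards [hu_sq] with p hp
    rw [Real.norm_eq_abs, show ((2:ℝ)) = ((2:ℕ):ℝ) by norm_num, Real.rpow_natCast,
      sq_abs, ← hp]
  have hnorm_v : (∫ p in S, ‖v p‖ ^ (2:ℝ)) = ∫ p in S, (y p.1 ^ 2 / a p.1) * y p.2 ^ 2 := by
    apply integral_congr_ae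
    filter_upwards [hv_sq] with p hp
    rw [Real.norm_eq_abs, show ((2:ℝ)) = ((2:ℕ):ℝ) by norm_num, Real.rpow_natCast,
      sq_abs, ← hp]
  -- compute ∫ v²
  have hIv : (∫ p in S, (y p.1 ^ 2 / a p.1) * y p.2 ^ 2)
      = (∫ x in Set.Ioo (0:ℝ) 1, y x ^ 2 / a x) * ∫ τ in Set.Ioo (0:ℝ) 1, y τ ^ 2 := by
    rw [← hrestr]
    exact integral_prod_mul (μ := volume.restrict (Set.Ioo (0:ℝ) 1))
      (ν := volume.restrict (Set.Ioo (0:ℝ) 1)) (fun x => y x ^ 2 / a x) (fun τ => y τ ^ 2)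
  -- nonnegativity and bounds on the 1-d integrals
  have hIF0 : 0 ≤ ∫ x in Set.Ioo (0:ℝ) 1, y x ^ 2 / a x := by
    apply setIntegral_nonneg measurableSet_Ioo
    intro x hx
    exact div_nonneg (sq_nonneg _) (ha_pos x ⟨hx.1, hx.2.le⟩).le
  have hIG0 : 0 ≤ ∫ τ in Set.Ioo (0:ℝ) 1, y τ ^ 2 :=
    setIntegral_nonneg measurableSet_Ioo fun τ _ => sq_nonneg _
  have hIG_le : (∫ τ in Set.Ioo (0:ℝ) 1, y τ ^ 2)
      ≤ M ^ 2 * ∫ x in Set.Ioo (0:ℝ) 1, y x ^ 2 / a x := by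
    rw [← integral_const_mul]
    apply setIntegral_mono_on hy2_int (hy_int.const_mul (M ^ 2)) measurableSet_Ioo
    intro x hx
    have hax : 0 < a x := ha_pos x ⟨hx.1, hx.2.le⟩
    have h1 : y x ^ 2 = (y x ^ 2 / a x) * a x := by field_simp
    nlinarith [mul_nonneg (div_nonneg (sq_nonneg (y x)) hax.le)
      (sub_nonneg.2 (ha_le x hx)), h1]
  have hIK0 : 0 ≤ ∫ p in S, (K p.1 p.2) ^ 2 / a p.1 := by
    apply integral_nonneg_of_ae
    filter_upwards [haeS] with p hp
    exact div_nonneg (sq_nonneg _) (haS p hp).le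
  -- finish
  set IK := ∫ p in S, (K p.1 p.2) ^ 2 / a p.1
  set IF := ∫ x in Set.Ioo (0:ℝ) 1, y x ^ 2 / a x
  set IG := ∫ τ in Set.Ioo (0:ℝ) 1, y τ ^ 2
  have key : (∫ p in S, ‖u p‖ * ‖v p‖) ≤ Real.sqrt IK * (M * IF) := by
    refine hCS.trans ?_
    rw [hnorm_u, hnorm_v, hIv]
    have h1 : (IK) ^ ((1:ℝ)/2) = Real.sqrt IK := (Real.sqrt_eq_rpow IK).symm
    have h2 : (IF * IG) ^ ((1:ℝ)/2) = Real.sqrt (IF * IG) := (Real.sqrt_eq_rpow (IF * IG)).symm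
    rw [h1, h2]
    apply mul_le_mul_of_nonneg_left _ (Real.sqrt_nonneg IK)
    have : IF * IG ≤ IF * (M ^ 2 * IF) := mul_le_mul_of_nonneg_left hIG_le hIF0
    calc Real.sqrt (IF * IG) ≤ Real.sqrt (IF * (M ^ 2 * IF)) := Real.sqrt_le_sqrt this
      _ = Real.sqrt ((M * IF) ^ 2) := by congr 1; ring
      _ = M * IF := Real.sqrt_sq (by positivity)
  calc |∫ p in S, K p.1 p.2 * y p.2 * y p.1 / a p.1| ≤ ∫ p in S, ‖u p‖ * ‖v p‖ := habs
    _ ≤ Real.sqrt IK * (M * IF) := key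
    _ = M * Real.sqrt IK * IF := by ring
end
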